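/- Under the model y = Σ_l Σ_{s∈l} G^s β^s 𝟙^s + β^0 𝟏 + ε, with mutations at distinct sites independent, ε independent of all mutations with Var(ε) = σ_e² I, and each site's covariance given by Cov(G_i^s 𝟙^s, G_j^s 𝟙^s) = (u^l/n^l)(h_t^l − h_{t,ij}^l), the covariance matrix of y equals Σ_l (σ_t^l)² A_t^l + σ_e² I, where (σ_t^l)² = (u^l/n^l) Σ_{s∈l, s∉S(t)} (β^s)² and [A_t^l]_{ij} = h_t^l − h_{t,ij}^l. -/

import Mathlib

/-!
Let `ε` be the random vector of an extra index `none : Option S`, with weight `1`. Then `y` is a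
constant plus a linear combination of independent random vectors, so by bilinearity of the
covariance and independence, `Cov(y)` is the sum of their covariance matrices weighted by the
squared coefficients. The sites in `S(t)` contribute nothing, and the others are grouped by locus.
-/

open MeasureTheory ProbabilityTheory

/-- The `n×n` covariance matrix of an `ℝⁿ`-valued random vector `Z`. -/
noncomputable def covMatrix {Ω : Type*} [MeasurableSpace Ω] (μ : Measure Ω) {n : ℕ}
    (Z : Ω → Fin n → ℝ) : Matrix (Fin n) (Fin n) ℝ :=
  Matrix.of fun i j =>
    (∫ ω, Z ω i * Z ω j ∂μ) - (∫ ω, Z ω i ∂μ) * (∫ ω, Z ω j ∂μ)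

open Finset

section Covariance

variable {Ω : Type*} [MeasurableSpace Ω] {μ : Measure Ω} [IsProbabilityMeasure μ] {n : ℕ}

theorem covMatrix_apply_eq_covariance {Z : Ω → Fin n → ℝ}
    (hZ : ∀ i, MemLp (fun ω => Z ω i) 2 μ) (i j : Fin n) :
    covMatrix μ Z i j = cov[fun ω => Z ω i, fun ω => Z ω j; μ] := by
  rw [covariance_eq_sub (hZ i) (hZ j)]
  rfl

theorem covMatrix_sum_mul_add_const_of_indepFun {ι : Type*} [Fintype ι]
    {X : ι → Ω → Fin n → ℝ} (hindep : Pairwise fun k l => IndepFun (X k) (X l) μ)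
    (hX : ∀ k i, MemLp (fun ω => X k ω i) 2 μ) (c : ι → ℝ) (b : ℝ) :
    covMatrix μ (fun ω i => ∑ k, c k * X k ω i + b) = ∑ k, c k ^ 2 • covMatrix μ (X k) := by
  have hterm : ∀ k i, MemLp (fun ω => c k * X k ω i) 2 μ := fun k i => (hX k i).const_mul (c k)
  have hsum : ∀ i, MemLp (fun ω => ∑ k, c k * X k ω i) 2 μ := fun i =>
    memLp_finsetSum _ fun k _ => hterm k i
  have hcross : ∀ i j k l, k ≠ l → cov[fun ω => X k ω i, fun ω => X l ω j; μ] = 0 :=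
    fun i j k l hkl => ((hindep hkl).comp (measurable_pi_apply i)
      (measurable_pi_apply j)).covariance_eq_zero (hX k i) (hX l j)
  have hsum_add : ∀ i, MemLp (fun ω => ∑ k, c k * X k ω i + b) 2 μ := fun i =>
    (hsum i).add (memLp_const b)
  ext i j
  rw [covMatrix_apply_eq_covariance hsum_add,
    covariance_add_const_left ((hsum i).integrable one_le_two),
    covariance_add_const_right ((hsum j).integrable one_le_two),
    covariance_fun_sum_fun_sum (fun k => hterm k i) (fun k => hterm k j)]
  simp only [Matrix.sum_apply, Matrix.smul_apply, smul_eq_mul,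
    covMatrix_apply_eq_covariance (hX _), covariance_const_mul_left, covariance_const_mul_right]
  refine sum_congr rfl fun k _ => ?_
  rw [sum_eq_single k (fun l _ hlk => by rw [hcross i j k l hlk.symm, mul_zero, mul_zero])
    (fun hk => absurd (mem_univ k) hk)]
  ring

end Covariance

theorem sum_smul_eq_sum_fiberwise_smul {R ι κ M : Type*} [CommSemiring R] [AddCommMonoid M]
    [Module R M] [Fintype ι] [DecidableEq ι] [Fintype κ] [DecidableEq κ]
    (g : ι → κ) (t : Finset ι) (w : ι → R) (a : κ → R) (B : κ → M) (C : ι → M)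
    (hzero : ∀ i ∈ t, C i = 0) (hC : ∀ i ∉ t, C i = a (g i) • B (g i)) :
    ∑ i, w i • C i = ∑ j, (a j * ∑ i ∈ univ.filter (fun i => g i = j ∧ i ∉ t), w i) • B j := by
  have hfiber : ∀ j, (a j * ∑ i ∈ univ.filter (fun i => g i = j ∧ i ∉ t), w i) • B j
      = ∑ i ∈ (univ.filter (· ∉ t)).filter (fun i => g i = j), w i • C i := by
    intro j
    rw [filter_filter, mul_sum, sum_smul]
    refine sum_congr (by ext; simp [and_comm]) fun i hmem => ?_
    obtain ⟨hi, rfl⟩ := (mem_filter.mp hmem).2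
    rw [hC i hi, smul_smul, mul_comm]
  rw [sum_congr rfl fun j _ => hfiber j, sum_fiberwise, sum_filter_of_ne]
  intro i _ hne hi
  exact hne (by rw [hzero i hi, smul_zero])

theorem trait_variance_decomposition_general {Ω : Type*} [MeasurableSpace Ω] (μ : Measure Ω)
    [IsProbabilityMeasure μ] {n nl : ℕ} {S : Type*} [Fintype S] [DecidableEq S]
    (loc : S → Fin nl) (St : Finset S)
    (Z : S → Ω → Fin n → ℝ) (ε : Ω → Fin n → ℝ) (β : S → ℝ) (β0 : ℝ)
    (u nsite h : Fin nl → ℝ) (hij : Fin nl → Fin n → Fin n → ℝ) (σe2 : ℝ)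
    (hindep : iIndepFun
      (fun o : Option S => Option.elim o ε Z) μ)
    (hZL2 : ∀ s i, MemLp (fun ω => Z s ω i) 2 μ)
    (hεL2 : ∀ i, MemLp (fun ω => ε ω i) 2 μ)
    (hεcov : covMatrix μ ε = σe2 • (1 : Matrix (Fin n) (Fin n) ℝ))
    (hdet : ∀ s ∈ St, covMatrix μ (Z s) = 0)
    (hcov : ∀ s ∉ St, ∀ i j,
      covMatrix μ (Z s) i j = u (loc s) / nsite (loc s) * (h (loc s) - hij (loc s) i j)) :
    covMatrix μ (fun ω i => (∑ s, Z s ω i * β s) + β0 + ε ω i)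
      = (∑ l, ((u l / nsite l) *
            ∑ s ∈ Finset.univ.filter (fun s => loc s = l ∧ s ∉ St), (β s) ^ 2) •
          Matrix.of (fun i j => h l - hij l i j))
        + σe2 • (1 : Matrix (Fin n) (Fin n) ℝ) := by
  set X : Option S → Ω → Fin n → ℝ := fun o => Option.elim o ε Z
  have hX : ∀ o i, MemLp (fun ω => X o ω i) 2 μ := by
    rintro (_ | s) i
    exacts [hεL2 i, hZL2 s i]
  have hy : (fun ω i => (∑ s, Z s ω i * β s) + β0 + ε ω i)
      = fun ω i => ∑ o, Option.elim o 1 β * X o ω i + β0 := by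
    funext ω i
    simp only [Fintype.sum_option, Option.elim, one_mul, X, mul_comm (β _)]
    ring
  have hsite : ∀ s ∉ St, covMatrix μ (Z s)
      = (u (loc s) / nsite (loc s)) • Matrix.of fun i j => h (loc s) - hij (loc s) i j :=
    fun s hs => by ext i j; simp [hcov s hs]
  rw [hy, covMatrix_sum_mul_add_const_of_indepFun (fun o o' hne => hindep.indepFun hne) hX,
    Fintype.sum_option]
  simp only [X, Option.elim, one_pow, one_smul, hεcov]
  rw [sum_smul_eq_sum_fiberwise_smul loc St _ (fun l => u l / nsite l)
    (fun l => Matrix.of fun i j => h l - hij l i j) _ hdet hsite, add_comm]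

/-- Theorem 1 of the paper.  Under the model `y = Σ_l Σ_{s∈l} G^s β^s 𝟙^s + β⁰𝟏 + ε`
(`Z s = G^s 𝟙^s`), with mutations at distinct sites independent and independent of `ε`,
`Var(ε) = σ_e² I`, sites `s ∈ S(t)` deterministic (zero covariance), and for `s ∉ S(t)`
`Cov(Z_i^s, Z_j^s) = (u^l/n^l)(h_t^l − h_{t,ij}^l)` for `l` the locus of `s`, the covariance
matrix of `y` is `Σ_l (σ_t^l)² A_t^l + σ_e² I` with
`(σ_t^l)² = (u^l/n^l) Σ_{s∈l, s∉S(t)} (β^s)²` and `[A_t^l]_{ij} = h_t^l − h_{t,ij}^l`. -/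
theorem trait_variance_decomposition {Ω : Type*} [MeasurableSpace Ω] (μ : Measure Ω)
    [IsProbabilityMeasure μ] {n nl : ℕ} {S : Type*} [Fintype S] [DecidableEq S]
    (loc : S → Fin nl) (St : Finset S)
    (Z : S → Ω → Fin n → ℝ) (ε : Ω → Fin n → ℝ) (β : S → ℝ) (β0 : ℝ)
    (u nsite h : Fin nl → ℝ) (hij : Fin nl → Fin n → Fin n → ℝ) (σe2 : ℝ)
    (hindep : iIndepFun
      (fun o : Option S => Option.elim o ε Z) μ)
    (hZL2 : ∀ s i, MemLp (fun ω => Z s ω i) 2 μ)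
    (hεL2 : ∀ i, MemLp (fun ω => ε ω i) 2 μ)
    (hZmeas : ∀ s, Measurable (Z s)) (hεmeas : Measurable ε)
    (hεcov : covMatrix μ ε = σe2 • (1 : Matrix (Fin n) (Fin n) ℝ))
    (hdet : ∀ s ∈ St, covMatrix μ (Z s) = 0)
    (hcov : ∀ s ∉ St, ∀ i j,
      covMatrix μ (Z s) i j = u (loc s) / nsite (loc s) * (h (loc s) - hij (loc s) i j)) :
    covMatrix μ (fun ω i => (∑ s, Z s ω i * β s) + β0 + ε ω i)
      = (∑ l, ((u l / nsite l) *
            ∑ s ∈ Finset.univ.filter (fun s => loc s = l ∧ s ∉ St), (β s) ^ 2) •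
          Matrix.of (fun i j => h l - hij l i j))
        + σe2 • (1 : Matrix (Fin n) (Fin n) ℝ) :=
  trait_variance_decomposition_general μ loc St Z ε β β0 u nsite h hij σe2 hindep hZL2 hεL2 hεcov
    hdet hcov
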